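/- Let Γ ⊂ ℝ² be compact, q a Borel probability measure on Γ, J, W : Γ × Γ → ℝ bounded continuous nonnegative kernels, and φ : ℝ → ℝ nonnegative, bounded, and Lipschitz continuous. Then for every continuous initial datum P₀ : Γ → [0,1] there exists a unique P : [0,∞) × Γ → ℝ, continuous in (t,r) and continuously differentiable in t, satisfying P(0,·) = P₀ and the forest-grass integro-differential equation ∂_t P_F(t,r) = (1 − P_F(t,r)) ∫_Γ J(r',r) P_F(t,r') dq(r') − P_F(t,r) φ(∫_Γ W(r',r) (1 − P_F(t,r')) dq(r')); moreover P(t,r) ∈ [0,1] for all t ≥ 0 and r ∈ Γ. -/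

import Mathlib

/-!
Read `t ↦ P t` as a curve in the Banach algebra `C(Γ, ℝ)`: the equation becomes the autonomous ODE
`u' = (1 - u) * A u - u * (φ ∘ B (1 - u))` with bounded linear kernel operators `A` and `B`, whose
right-hand side is Lipschitz on bounded sets. Uniqueness is then the Lipschitz uniqueness theorem,
once the pointwise derivatives of a jointly continuous solution are upgraded, through the
fundamental theorem of calculus, to a derivative in `C(Γ, ℝ)`. For existence, truncating the state
to `[0, 1]` makes the field globally Lipschitz and bounded, so Picard–Lindelöf gives a global
solution; as `A` is positive and `φ ≥ 0`, the truncated field points back into `[0, 1]` wherever a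
value leaves it, so the solution stays in `[0, 1]`, where the truncation does nothing.
-/

open Set MeasureTheory Metric Filter Topology
open scoped NNReal

section LipschitzOnBoundedSets

variable {α β γ : Type*} [PseudoMetricSpace α] [PseudoMetricSpace β] [PseudoMetricSpace γ]

theorem LipschitzOnWith.isBounded_image {K : ℝ≥0} {f : α → β} {s : Set α}
    (hf : LipschitzOnWith K f s) (hs : Bornology.IsBounded s) : Bornology.IsBounded (f '' s) := by
  rcases s.eq_empty_or_nonempty with rfl | ⟨x₀, hx₀⟩
  · simp
  obtain ⟨R, hR⟩ := (isBounded_iff_subset_closedBall x₀).mp hs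
  refine (isBounded_iff_subset_closedBall (f x₀)).mpr ⟨K * R, ?_⟩
  rintro _ ⟨x, hx, rfl⟩
  exact (hf.dist_le_mul x hx x₀ hx₀).trans (by gcongr; exact hR hx)

theorem LipschitzOnWith.mul_of_norm_le {R : Type*} [SeminormedRing R] {f g : α → R} {s : Set α}
    {Kf Kg Cf Cg : ℝ≥0} (hf : LipschitzOnWith Kf f s) (hg : LipschitzOnWith Kg g s)
    (hfC : ∀ x ∈ s, ‖f x‖ ≤ Cf) (hgC : ∀ x ∈ s, ‖g x‖ ≤ Cg) :
    LipschitzOnWith (Cf * Kg + Kf * Cg) (f * g) s := by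
  refine LipschitzOnWith.of_dist_le_mul fun x hx y hy => ?_
  have hfxy := hf.dist_le_mul x hx y hy
  have hgxy := hg.dist_le_mul x hx y hy
  rw [dist_eq_norm] at hfxy hgxy ⊢
  calc ‖f x * g x - f y * g y‖ = ‖f x * (g x - g y) + (f x - f y) * g y‖ := by
        simp only [mul_sub, sub_mul, sub_add_sub_cancel]
    _ ≤ ‖f x‖ * ‖g x - g y‖ + ‖f x - f y‖ * ‖g y‖ :=
        (norm_add_le _ _).trans (add_le_add (norm_mul_le _ _) (norm_mul_le _ _))
    _ ≤ Cf * (Kg * dist x y) + Kf * dist x y * Cg := by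
        gcongr
        exacts [hfC x hx, hgC y hy]
    _ = (Cf * Kg + Kf * Cg : ℝ≥0) * dist x y := by push_cast; ring

def LipschitzOnBoundedSets (f : α → β) : Prop :=
  ∀ s : Set α, Bornology.IsBounded s → ∃ K, LipschitzOnWith K f s

theorem LipschitzWith.lipschitzOnBoundedSets {K : ℝ≥0} {f : α → β} (hf : LipschitzWith K f) :
    LipschitzOnBoundedSets f :=
  fun _ _ => ⟨K, hf.lipschitzOnWith⟩

namespace LipschitzOnBoundedSets

theorem isBounded_image {f : α → β} (hf : LipschitzOnBoundedSets f) {s : Set α}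
    (hs : Bornology.IsBounded s) : Bornology.IsBounded (f '' s) :=
  let ⟨_, hK⟩ := hf s hs; hK.isBounded_image hs

theorem continuous {f : α → β} (hf : LipschitzOnBoundedSets f) : Continuous f :=
  continuous_iff_continuousAt.mpr fun x =>
    let ⟨_, hK⟩ := hf (ball x 1) isBounded_ball
    hK.continuousOn.continuousAt (ball_mem_nhds x one_pos)

theorem comp {g : β → γ} {f : α → β} (hg : LipschitzOnBoundedSets g)
    (hf : LipschitzOnBoundedSets f) : LipschitzOnBoundedSets (g ∘ f) := fun s hs =>
  let ⟨_, hKf⟩ := hf s hs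
  let ⟨_, hKg⟩ := hg (f '' s) (hKf.isBounded_image hs)
  ⟨_, hKg.comp hKf (mapsTo_image f s)⟩

theorem sub {E : Type*} [SeminormedAddCommGroup E] {f g : α → E} (hf : LipschitzOnBoundedSets f)
    (hg : LipschitzOnBoundedSets g) : LipschitzOnBoundedSets (f - g) := fun s hs =>
  let ⟨_, hKf⟩ := hf s hs
  let ⟨_, hKg⟩ := hg s hs
  ⟨_, hKf.sub hKg⟩

theorem mul {R : Type*} [SeminormedRing R] {f g : α → R} (hf : LipschitzOnBoundedSets f)
    (hg : LipschitzOnBoundedSets g) : LipschitzOnBoundedSets (f * g) := fun s hs => by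
  obtain ⟨Kf, hKf⟩ := hf s hs
  obtain ⟨Kg, hKg⟩ := hg s hs
  obtain ⟨Cf, hCf⟩ := isBounded_iff_forall_norm_le.mp (hKf.isBounded_image hs)
  obtain ⟨Cg, hCg⟩ := isBounded_iff_forall_norm_le.mp (hKg.isBounded_image hs)
  exact ⟨_, hKf.mul_of_norm_le hKg
    (fun x hx => (hCf _ (mem_image_of_mem f hx)).trans (Real.le_coe_toNNReal Cf))
    (fun x hx => (hCg _ (mem_image_of_mem g hx)).trans (Real.le_coe_toNNReal Cg))⟩

end LipschitzOnBoundedSets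

section AutonomousODE

variable {E : Type*} [NormedAddCommGroup E] [NormedSpace ℝ E] {v : E → E}

theorem exists_forall_hasDerivWithinAt_Icc_of_lipschitzWith [CompleteSpace E] {K C : ℝ≥0}
    (hv : LipschitzWith K v) (hC : ∀ x, ‖v x‖ ≤ C) (x₀ : E) {T : ℝ} (hT : 0 ≤ T) :
    ∃ f : ℝ → E, f 0 = x₀ ∧ ∀ t ∈ Icc 0 T, HasDerivWithinAt f (v (f t)) (Icc 0 T) t := by
  lift T to ℝ≥0 using hT
  have : IsPicardLindelof (fun _ => v) (tmin := 0) (tmax := T) ⟨0, le_rfl, T.2⟩ x₀ (C * T) 0 C K :=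
    { lipschitzOnWith := fun _ _ => hv.lipschitzOnWith
      continuousOn := fun _ _ => continuousOn_const
      norm_le := fun _ _ x _ => hC x
      mul_max_le := by simp }
  exact this.exists_eq_forall_mem_Icc_hasDerivWithinAt₀

theorem hasDerivWithinAt_Ici_of_Icc {f : ℝ → E} {f' : E} {a b t : ℝ} (ht : t ∈ Ico a b)
    (h : HasDerivWithinAt f f' (Icc a b) t) : HasDerivWithinAt f f' (Ici t) t :=
  h.mono_of_mem_nhdsWithin (Icc_mem_nhdsGE_of_mem ht)

theorem exists_forall_hasDerivWithinAt_Ici_of_lipschitzWith [CompleteSpace E] {K C : ℝ≥0}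
    (hv : LipschitzWith K v) (hC : ∀ x, ‖v x‖ ≤ C) (x₀ : E) :
    ∃ f : ℝ → E, f 0 = x₀ ∧ ∀ t ∈ Ici 0, HasDerivWithinAt f (v (f t)) (Ici 0) t := by
  choose f hf0 hf using fun n : ℕ =>
    exists_forall_hasDerivWithinAt_Icc_of_lipschitzWith hv hC x₀ n.cast_nonneg
  have hagree : ∀ m n : ℕ, m ≤ n → EqOn (f m) (f n) (Icc 0 m) := by
    intro m n hmn
    have hmn' : (m : ℝ) ≤ n := Nat.cast_le.mpr hmn
    refine ODE_solution_unique (v := fun _ => v) (fun _ => hv)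
      (fun t ht => (hf m t ht).continuousWithinAt)
      (fun t ht => hasDerivWithinAt_Ici_of_Icc ht (hf m t (Ico_subset_Icc_self ht)))
      (fun t ht => ((hf n t (Icc_subset_Icc_right hmn' ht)).continuousWithinAt).mono
        (Icc_subset_Icc_right hmn'))
      (fun t ht => hasDerivWithinAt_Ici_of_Icc ⟨ht.1, ht.2.trans_le hmn'⟩
        (hf n t ⟨ht.1, ht.2.le.trans hmn'⟩))
      ((hf0 m).trans (hf0 n).symm)
  have hglue : ∀ n : ℕ, EqOn (fun t => f (⌊t⌋₊ + 1) t) (f n) (Icc 0 n) := by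
    intro n t ht
    have ht' : t ∈ Icc (0 : ℝ) ↑(⌊t⌋₊ + 1) :=
      ⟨ht.1, by push_cast; exact (Nat.lt_floor_add_one t).le⟩
    rcases le_total (⌊t⌋₊ + 1) n with h | h
    exacts [hagree _ n h ht', (hagree n _ h ht).symm]
  refine ⟨fun t => f (⌊t⌋₊ + 1) t, (hglue 1 ⟨le_rfl, by simp⟩).trans (hf0 1), fun t ht => ?_⟩
  set n := ⌊t⌋₊ + 1
  have htn : t < n := by push_cast [n]; exact Nat.lt_floor_add_one t
  have hnhds : Icc 0 (n : ℝ) ∈ 𝓝[Ici 0] t :=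
    mem_of_superset (inter_mem_nhdsWithin _ (Iic_mem_nhds htn)) fun _ hs => hs
  have ht' : t ∈ Icc (0 : ℝ) n := ⟨ht, htn.le⟩
  rw [hglue n ht']
  exact ((hf n t ht').mono_of_mem_nhdsWithin hnhds).congr_of_eventuallyEq
    (eventually_of_mem hnhds (hglue n)) (hglue n ht')

theorem eqOn_Ici_of_lipschitzOnBoundedSets (hv : LipschitzOnBoundedSets v) {f g : ℝ → E}
    (hf : ∀ t ∈ Ici 0, HasDerivWithinAt f (v (f t)) (Ici 0) t)
    (hg : ∀ t ∈ Ici 0, HasDerivWithinAt g (v (g t)) (Ici 0) t) (h0 : f 0 = g 0) :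
    EqOn f g (Ici 0) := by
  intro T hT
  have hfc : ContinuousOn f (Icc 0 T) := fun t ht =>
    (hf t ht.1).continuousWithinAt.mono Icc_subset_Ici_self
  have hgc : ContinuousOn g (Icc 0 T) := fun t ht =>
    (hg t ht.1).continuousWithinAt.mono Icc_subset_Ici_self
  set s := f '' Icc 0 T ∪ g '' Icc 0 T
  obtain ⟨K, hK⟩ := hv s ((isCompact_Icc.image_of_continuousOn hfc).isBounded.union
    (isCompact_Icc.image_of_continuousOn hgc).isBounded)
  exact ODE_solution_unique_of_mem_Icc_right (v := fun _ => v) (s := fun _ => s) (fun _ _ => hK)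
    hfc (fun t ht => (hf t ht.1).mono (Ici_subset_Ici.mpr ht.1))
    (fun t ht => .inl (mem_image_of_mem f (Ico_subset_Icc_self ht))) hgc
    (fun t ht => (hg t ht.1).mono (Ici_subset_Ici.mpr ht.1))
    (fun t ht => .inr (mem_image_of_mem g (Ico_subset_Icc_self ht))) h0 ⟨hT, le_rfl⟩

end AutonomousODE

theorem nonneg_of_hasDerivWithinAt_Ici {u u' : ℝ → ℝ}
    (hu : ∀ t ∈ Ici 0, HasDerivWithinAt u (u' t) (Ici 0) t) (h0 : 0 ≤ u 0)
    (hu' : ∀ t ∈ Ici 0, u t ≤ 0 → 0 ≤ u' t) : ∀ t ∈ Ici 0, 0 ≤ u t := by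
  intro T hT
  -- `-u` can never cross the barrier `ε * (t + 1)` from below: where it touches it, `u < 0`
  have hbarrier : ∀ ε > 0, -u T ≤ ε * (T + 1) := fun ε hε =>
    image_le_of_deriv_right_lt_deriv_boundary (f := fun t => -u t)
      (B := fun t => ε * (t + 1)) (B' := fun _ => ε)
      (fun t ht => (hu t ht.1).continuousWithinAt.neg.mono Icc_subset_Ici_self)
      (fun t ht => (hu t ht.1).neg.mono (Ici_subset_Ici.mpr ht.1))
      (by linarith) (fun t => by simpa using ((hasDerivAt_id t).add_const 1).const_mul ε)
      (fun t ht hut => by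
        have : u t ≤ 0 := by nlinarith [ht.1]
        linarith [hu' t ht.1 this])
      ⟨hT, le_rfl⟩
  refine neg_nonpos.mp (le_of_forall_pos_le_add fun δ hδ => ?_)
  have hT1 : 0 < T + 1 := by linarith [show (0 : ℝ) ≤ T from hT]
  simpa [div_mul_cancel₀ δ hT1.ne'] using hbarrier (δ / (T + 1)) (by positivity)

section ContinuousMapCurves

theorem exists_continuous_curve_of_continuousOn_Ici_prod {X Y : Type*} [TopologicalSpace X]
    [TopologicalSpace Y] {P : ℝ → X → Y}
    (hP : ContinuousOn (fun p : ℝ × X => P p.1 p.2) (Ici 0 ×ˢ univ)) :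
    ∃ c : ℝ → C(X, Y), Continuous c ∧ ∀ t ∈ Ici 0, ∀ x, c t x = P t x := by
  let P' : C(Ici (0 : ℝ) × X, Y) :=
    ⟨fun p => P p.1 p.2, hP.comp_continuous
      (by fun_prop : Continuous fun p : Ici (0 : ℝ) × X => ((p.1 : ℝ), p.2))
      fun p => ⟨p.1.2, mem_univ _⟩⟩
  refine ⟨fun t => P'.curry (projIci 0 t),
    P'.curry.continuous.comp ((continuous_const.max continuous_id).subtype_mk _), fun t ht x => ?_⟩
  simp [P', projIci_of_mem ht]

variable {X : Type*} [TopologicalSpace X] [CompactSpace X]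

theorem ContinuousMap.lipschitzWith_comp {Y Z : Type*} [PseudoMetricSpace Y] [PseudoMetricSpace Z]
    {K : ℝ≥0} (φ : C(Y, Z)) (hφ : LipschitzWith K φ) :
    LipschitzWith K fun u : C(X, Y) => φ.comp u :=
  LipschitzWith.of_dist_le_mul fun u v =>
    (ContinuousMap.dist_le (by positivity)).mpr fun x =>
      (hφ.dist_le_mul (u x) (v x)).trans (by gcongr; exact ContinuousMap.dist_apply_le_dist x)

theorem hasDerivWithinAt_Ici_of_forall_apply {E : Type*} [NormedAddCommGroup E] [NormedSpace ℝ E]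
    [CompleteSpace E] {c g : ℝ → C(X, E)} (hc : Continuous c) (hg : Continuous g)
    (h : ∀ x, ∀ t ∈ Ici 0, HasDerivWithinAt (fun s => c s x) (g t x) (Ici 0) t) :
    ∀ t ∈ Ici 0, HasDerivWithinAt c (g t) (Ici 0) t := by
  have hFTC : ∀ t ∈ Ici 0, c t = c 0 + ∫ s in 0..t, g s := by
    intro t ht
    ext x
    have hcomm := (ContinuousMap.evalCLM ℝ x).intervalIntegral_comp_comm
      (hg.intervalIntegrable (μ := volume) 0 t)
    simp only [ContinuousMap.evalCLM_apply] at hcomm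
    rw [ContinuousMap.add_apply, ← hcomm,
      intervalIntegral.integral_eq_sub_of_hasDeriv_right_of_le ht
      ((continuous_eval_const x).comp hc).continuousOn
      (fun s hs => ((h x s hs.1.le).hasDerivAt (Ici_mem_nhds hs.1)).hasDerivWithinAt)
      (((continuous_eval_const x).comp hg).intervalIntegrable 0 t)]
    exact (add_sub_cancel _ _).symm
  intro t ht
  exact (((hg.integral_hasStrictDerivAt 0 t).hasDerivAt.const_add (c 0)).hasDerivWithinAt).congr
    hFTC (hFTC t ht)

end ContinuousMapCurves

section KernelIntegral

variable {X : Type*} [TopologicalSpace X] [CompactSpace X] [MeasurableSpace X]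
  [OpensMeasurableSpace X] {q : Measure X} [IsFiniteMeasure q]

theorem Continuous.integrable_of_compactSpace {E : Type*} [NormedAddCommGroup E] {f : X → E}
    (hf : Continuous f) : Integrable f q :=
  let ⟨C, hC⟩ := isCompact_univ.exists_bound_of_continuousOn hf.continuousOn
  .of_bound hf.aestronglyMeasurable_of_compactSpace C (ae_of_all _ fun x => hC x (mem_univ x))

omit [MeasurableSpace X] [OpensMeasurableSpace X] in
theorem norm_kernel_mul_le (k : C(X × X, ℝ)) (u : C(X, ℝ)) (r r' : X) :
    ‖k (r', r) * u r'‖ ≤ ‖k‖ * ‖u‖ :=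
  (norm_mul_le _ _).trans (mul_le_mul (k.norm_coe_le_norm _) (u.norm_coe_le_norm r')
    (norm_nonneg _) (norm_nonneg _))

variable (q) in
noncomputable def kernelIntegral [FirstCountableTopology X] (k : C(X × X, ℝ)) :
    C(X, ℝ) →L[ℝ] C(X, ℝ) :=
  LinearMap.mkContinuous
    { toFun := fun u => ⟨fun r => ∫ r', k (r', r) * u r' ∂q,
        continuous_of_dominated (fun _ => (by fun_prop : Continuous _).aestronglyMeasurable)
          (fun r => ae_of_all _ (norm_kernel_mul_le k u r)) (integrable_const _)
          (ae_of_all _ fun _ => by fun_prop)⟩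
      map_add' := fun u v => by
        ext r
        simp only [ContinuousMap.coe_mk, ContinuousMap.add_apply, mul_add]
        exact integral_add (by fun_prop : Continuous _).integrable_of_compactSpace
          (by fun_prop : Continuous _).integrable_of_compactSpace
      map_smul' := fun a u => by
        ext r
        simp only [ContinuousMap.coe_mk, ContinuousMap.smul_apply, smul_eq_mul, RingHom.id_apply,
          mul_left_comm _ a, integral_const_mul] }
    (‖k‖ * q.real univ) fun u =>
      (ContinuousMap.norm_le _ (by positivity)).mpr fun r =>
        (norm_integral_le_of_norm_le_const (ae_of_all _ (norm_kernel_mul_le k u r))).trans_eq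
          (mul_right_comm _ _ _)

variable [FirstCountableTopology X]

@[simp]
theorem kernelIntegral_apply (k : C(X × X, ℝ)) (u : C(X, ℝ)) (r : X) :
    kernelIntegral q k u r = ∫ r', k (r', r) * u r' ∂q :=
  rfl

theorem kernelIntegral_nonneg {k : C(X × X, ℝ)} (hk : ∀ p, 0 ≤ k p) {u : C(X, ℝ)}
    (hu : ∀ r, 0 ≤ u r) (r : X) : 0 ≤ kernelIntegral q k u r :=
  integral_nonneg fun r' => mul_nonneg (hk _) (hu r')

end KernelIntegral

section ForestGrassField

variable {X : Type*} [TopologicalSpace X] {A B : C(X, ℝ) →L[ℝ] C(X, ℝ)} {φ : C(ℝ, ℝ)}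

theorem HasDerivWithinAt.continuousMap_apply [CompactSpace X] {E : Type*} [NormedAddCommGroup E]
    [NormedSpace ℝ E] {c : ℝ → C(X, E)} {c' : C(X, E)} {s : Set ℝ} {t : ℝ}
    (h : HasDerivWithinAt c c' s t) (x : X) : HasDerivWithinAt (fun s => c s x) (c' x) s t :=
  (ContinuousMap.evalCLM ℝ x : C(X, E) →L[ℝ] E).hasFDerivAt.comp_hasDerivWithinAt t h

variable (A B φ) in
def forestGrassField (u : C(X, ℝ)) : C(X, ℝ) :=
  (1 - u) * A u - u * φ.comp (B (1 - u))

theorem forestGrassField_apply (u : C(X, ℝ)) (r : X) :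
    forestGrassField A B φ u r = (1 - u r) * A u r - u r * φ (B (1 - u) r) :=
  rfl

theorem lipschitzOnBoundedSets_forestGrassField [CompactSpace X] {L : ℝ≥0}
    (hφ : LipschitzWith L φ) :
    LipschitzOnBoundedSets (forestGrassField A B φ) := by
  have hsub : LipschitzOnBoundedSets fun u : C(X, ℝ) => 1 - u :=
    ((LipschitzWith.const 1).sub LipschitzWith.id).lipschitzOnBoundedSets
  exact (hsub.mul A.lipschitz.lipschitzOnBoundedSets).sub
    (LipschitzWith.id.lipschitzOnBoundedSets.mul
      (((φ.lipschitzWith_comp hφ).comp B.lipschitz).lipschitzOnBoundedSets.comp hsub))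

noncomputable def unitClamp : C(ℝ, ℝ) :=
  ⟨fun x => projIcc 0 1 zero_le_one x, by fun_prop⟩

theorem unitClamp_apply (x : ℝ) : unitClamp x = projIcc 0 1 zero_le_one x :=
  rfl

theorem unitClamp_mem (x : ℝ) : unitClamp x ∈ Icc (0 : ℝ) 1 :=
  (projIcc 0 1 zero_le_one x).2

theorem lipschitzWith_unitClamp : LipschitzWith 1 unitClamp := by
  have h := (LipschitzWith.subtype_val (Icc (0 : ℝ) 1)).comp (LipschitzWith.projIcc zero_le_one)
  rwa [mul_one] at h

variable (A B φ) in
noncomputable def truncatedForestGrassField (u : C(X, ℝ)) : C(X, ℝ) :=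
  forestGrassField A B φ (unitClamp.comp u)

theorem truncatedForestGrassField_eq {u : C(X, ℝ)} (hu : ∀ r, u r ∈ Icc (0 : ℝ) 1) :
    truncatedForestGrassField A B φ u = forestGrassField A B φ u := by
  have hfix : unitClamp.comp u = u := by
    ext r
    rw [ContinuousMap.comp_apply, unitClamp_apply, projIcc_of_mem _ (hu r)]
  rw [truncatedForestGrassField, hfix]

theorem exists_lipschitzWith_truncatedForestGrassField [CompactSpace X] {L : ℝ≥0}
    (hφ : LipschitzWith L φ) :
    ∃ K C : ℝ≥0, LipschitzWith K (truncatedForestGrassField A B φ) ∧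
      ∀ u, ‖truncatedForestGrassField A B φ u‖ ≤ C := by
  set S := range fun u : C(X, ℝ) => unitClamp.comp u
  have hS : Bornology.IsBounded S := by
    refine (isBounded_closedBall (x := (0 : C(X, ℝ))) (r := 1)).subset ?_
    rintro _ ⟨u, rfl⟩
    refine mem_closedBall_zero_iff.mpr ((ContinuousMap.norm_le _ zero_le_one).mpr fun r => ?_)
    have hr := unitClamp_mem (u r)
    show |unitClamp (u r)| ≤ 1
    exact abs_le.mpr ⟨by linarith [hr.1], hr.2⟩
  have hG := lipschitzOnBoundedSets_forestGrassField (A := A) (B := B) hφ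
  obtain ⟨K, hK⟩ := hG S hS
  obtain ⟨C, hC⟩ := isBounded_iff_forall_norm_le.mp (hG.isBounded_image hS)
  refine ⟨K * 1, C.toNNReal, lipschitzOnWith_univ.mp ?_, fun u => ?_⟩
  · exact hK.comp (unitClamp.lipschitzWith_comp lipschitzWith_unitClamp).lipschitzOnWith
      fun u _ => ⟨u, rfl⟩
  · exact (hC _ ⟨_, ⟨u, rfl⟩, rfl⟩).trans (Real.le_coe_toNNReal C)

theorem truncatedForestGrassField_apply_nonneg (hA : ∀ u, (∀ r, 0 ≤ u r) → ∀ r, 0 ≤ A u r)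
    {u : C(X, ℝ)} {r : X} (hur : u r ≤ 0) : 0 ≤ truncatedForestGrassField A B φ u r := by
  have h0 : unitClamp (u r) = 0 := by
    rw [unitClamp_apply, projIcc_of_le_left _ hur]
  simpa [truncatedForestGrassField, forestGrassField_apply, h0] using
    hA _ (fun r' => (unitClamp_mem (u r')).1) r

theorem truncatedForestGrassField_apply_nonpos (hφ : ∀ x, 0 ≤ φ x) {u : C(X, ℝ)} {r : X}
    (hur : 1 ≤ u r) : truncatedForestGrassField A B φ u r ≤ 0 := by
  have h1 : unitClamp (u r) = 1 := by
    rw [unitClamp_apply, projIcc_of_right_le _ hur]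
  simpa [truncatedForestGrassField, forestGrassField_apply, h1] using hφ _

end ForestGrassField

section ForestGrassSolutions

variable {X : Type*} [TopologicalSpace X] [CompactSpace X] {A B : C(X, ℝ) →L[ℝ] C(X, ℝ)}
  {φ : C(ℝ, ℝ)}

theorem mem_Icc_of_hasDerivWithinAt_truncatedForestGrassField
    (hA : ∀ u, (∀ r, 0 ≤ u r) → ∀ r, 0 ≤ A u r) (hφ : ∀ x, 0 ≤ φ x) {c : ℝ → C(X, ℝ)}
    (hc : ∀ t ∈ Ici 0, HasDerivWithinAt c (truncatedForestGrassField A B φ (c t)) (Ici 0) t)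
    (h0 : ∀ r, c 0 r ∈ Icc (0 : ℝ) 1) : ∀ t ∈ Ici 0, ∀ r, c t r ∈ Icc (0 : ℝ) 1 := by
  intro t ht r
  have hcr := fun t ht => (hc t ht).continuousMap_apply r
  refine ⟨nonneg_of_hasDerivWithinAt_Ici hcr (h0 r).1
    (fun s _ hs => truncatedForestGrassField_apply_nonneg hA hs) t ht, ?_⟩
  refine sub_nonneg.mp (nonneg_of_hasDerivWithinAt_Ici (fun s hs => (hcr s hs).const_sub 1)
    (sub_nonneg.mpr (h0 r).2) (fun s _ hs => ?_) t ht)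
  exact neg_nonneg.mpr (truncatedForestGrassField_apply_nonpos hφ (sub_nonpos.mp hs))

theorem exists_forall_hasDerivWithinAt_forestGrassField {L : ℝ≥0} (hφL : LipschitzWith L φ)
    (hA : ∀ u, (∀ r, 0 ≤ u r) → ∀ r, 0 ≤ A u r) (hφ : ∀ x, 0 ≤ φ x) (u₀ : C(X, ℝ))
    (hu₀ : ∀ r, u₀ r ∈ Icc (0 : ℝ) 1) :
    ∃ c : ℝ → C(X, ℝ), c 0 = u₀ ∧
      (∀ t ∈ Ici 0, HasDerivWithinAt c (forestGrassField A B φ (c t)) (Ici 0) t) ∧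
      ∀ t ∈ Ici 0, ∀ r, c t r ∈ Icc (0 : ℝ) 1 := by
  obtain ⟨K, C, hK, hC⟩ := exists_lipschitzWith_truncatedForestGrassField (A := A) (B := B) hφL
  obtain ⟨c, hc0, hc⟩ := exists_forall_hasDerivWithinAt_Ici_of_lipschitzWith hK hC u₀
  have hc01 := mem_Icc_of_hasDerivWithinAt_truncatedForestGrassField hA hφ hc (hc0 ▸ hu₀)
  refine ⟨c, hc0, fun t ht => ?_, hc01⟩
  rw [← truncatedForestGrassField_eq (hc01 t ht)]
  exact hc t ht

variable [MeasurableSpace X] [OpensMeasurableSpace X] [FirstCountableTopology X]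
  {q : Measure X} [IsFiniteMeasure q] {J W : C(X × X, ℝ)}

theorem forestGrassField_kernelIntegral_apply (u : C(X, ℝ)) (r : X) :
    forestGrassField (kernelIntegral q J) (kernelIntegral q W) φ u r =
      (1 - u r) * (∫ r', J (r', r) * u r' ∂q) - u r * φ (∫ r', W (r', r) * (1 - u r') ∂q) :=
  rfl

theorem exists_curve_hasDerivWithinAt_forestGrassField {L : ℝ≥0} (hφL : LipschitzWith L φ)
    {P : ℝ → X → ℝ} (hPc : ContinuousOn (fun p : ℝ × X => P p.1 p.2) (Ici 0 ×ˢ univ))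
    (hP : ∀ r, ∀ t ∈ Ici 0, HasDerivWithinAt (fun s => P s r)
      ((1 - P t r) * (∫ r', J (r', r) * P t r' ∂q)
        - P t r * φ (∫ r', W (r', r) * (1 - P t r') ∂q)) (Ici 0) t) :
    ∃ c : ℝ → C(X, ℝ), (∀ t ∈ Ici 0, ∀ r, c t r = P t r) ∧
      ∀ t ∈ Ici 0, HasDerivWithinAt c
        (forestGrassField (kernelIntegral q J) (kernelIntegral q W) φ (c t)) (Ici 0) t := by
  obtain ⟨c, hc, hcP⟩ := exists_continuous_curve_of_continuousOn_Ici_prod hPc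
  have hG := (lipschitzOnBoundedSets_forestGrassField
    (A := kernelIntegral q J) (B := kernelIntegral q W) hφL).continuous
  refine ⟨c, hcP, hasDerivWithinAt_Ici_of_forall_apply hc (hG.comp hc) fun r t ht => ?_⟩
  have hct : ∀ r', c t r' = P t r' := hcP t ht
  simp only [forestGrassField_kernelIntegral_apply, hct]
  exact (hP r t ht).congr (fun s hs => hcP s hs r) (hct r)

end ForestGrassSolutions

theorem forest_grass_ide_wellposed_general
    (Γ : Set (ℝ × ℝ)) (hΓ : IsCompact Γ)
    (q : Measure Γ) [IsProbabilityMeasure q]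
    (J W : Γ → Γ → ℝ)
    (hJcont : Continuous fun p : Γ × Γ => J p.1 p.2)
    (hWcont : Continuous fun p : Γ × Γ => W p.1 p.2)
    (hJnn : ∀ r r' : Γ, 0 ≤ J r r')
    (φ : ℝ → ℝ) (L : NNReal) (hφ : LipschitzWith L φ) (hφnn : ∀ x : ℝ, 0 ≤ φ x)
    (P₀ : Γ → ℝ) (hP₀cont : Continuous P₀) (hP₀range : ∀ r : Γ, P₀ r ∈ Icc (0:ℝ) 1) :
    (∃ P : ℝ → Γ → ℝ,
      (∀ r : Γ, P 0 r = P₀ r) ∧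
      ContinuousOn (fun p : ℝ × Γ => P p.1 p.2) (Ici (0:ℝ) ×ˢ univ) ∧
      (∀ r : Γ, ∀ t ∈ Ici (0:ℝ),
        HasDerivWithinAt (fun s => P s r)
          ((1 - P t r) * (∫ r', J r' r * P t r' ∂q)
            - P t r * φ (∫ r', W r' r * (1 - P t r') ∂q)) (Ici 0) t) ∧
      (∀ t ∈ Ici (0:ℝ), ∀ r : Γ, P t r ∈ Icc (0:ℝ) 1)) ∧
    (∀ P Q : ℝ → Γ → ℝ,
      (∀ r : Γ, P 0 r = P₀ r) →
      ContinuousOn (fun p : ℝ × Γ => P p.1 p.2) (Ici (0:ℝ) ×ˢ univ) →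
      (∀ r : Γ, ∀ t ∈ Ici (0:ℝ),
        HasDerivWithinAt (fun s => P s r)
          ((1 - P t r) * (∫ r', J r' r * P t r' ∂q)
            - P t r * φ (∫ r', W r' r * (1 - P t r') ∂q)) (Ici 0) t) →
      (∀ r : Γ, Q 0 r = P₀ r) →
      ContinuousOn (fun p : ℝ × Γ => Q p.1 p.2) (Ici (0:ℝ) ×ˢ univ) →
      (∀ r : Γ, ∀ t ∈ Ici (0:ℝ),
        HasDerivWithinAt (fun s => Q s r)
          ((1 - Q t r) * (∫ r', J r' r * Q t r' ∂q)
            - Q t r * φ (∫ r', W r' r * (1 - Q t r') ∂q)) (Ici 0) t) →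
      ∀ t ∈ Ici (0:ℝ), ∀ r : Γ, P t r = Q t r) := by
  have : CompactSpace Γ := isCompact_iff_compactSpace.mp hΓ
  let J' : C(Γ × Γ, ℝ) := ⟨fun p => J p.1 p.2, hJcont⟩
  let W' : C(Γ × Γ, ℝ) := ⟨fun p => W p.1 p.2, hWcont⟩
  let Φ : C(ℝ, ℝ) := ⟨φ, hφ.continuous⟩
  refine ⟨?_, fun P Q hP0 hPc hP hQ0 hQc hQ t ht r => ?_⟩
  · obtain ⟨c, hc0, hc, hc01⟩ := exists_forall_hasDerivWithinAt_forestGrassField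
      (B := kernelIntegral q W') (φ := Φ) hφ
      (fun u hu => kernelIntegral_nonneg (q := q) (k := J') (fun p => hJnn p.1 p.2) hu) hφnn
      ⟨P₀, hP₀cont⟩ hP₀range
    have hcc : ContinuousOn c (Ici 0) := fun t ht => (hc t ht).continuousWithinAt
    refine ⟨fun t r => c t r, fun r => DFunLike.congr_fun hc0 r, ?_, fun r t ht => ?_, hc01⟩
    · exact continuous_eval.comp_continuousOn
        ((hcc.comp continuousOn_fst fun p hp => hp.1).prodMk continuousOn_snd)
    · exact (hc t ht).continuousMap_apply r
  · obtain ⟨cP, hcP, hcP'⟩ := exists_curve_hasDerivWithinAt_forestGrassField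
      (q := q) (J := J') (W := W') (φ := Φ) hφ hPc hP
    obtain ⟨cQ, hcQ, hcQ'⟩ := exists_curve_hasDerivWithinAt_forestGrassField
      (q := q) (J := J') (W := W') (φ := Φ) hφ hQc hQ
    have hPQ := eqOn_Ici_of_lipschitzOnBoundedSets
      (lipschitzOnBoundedSets_forestGrassField hφ) hcP' hcQ' <| by
      ext r
      rw [hcP 0 (mem_Ici.mpr le_rfl), hcQ 0 (mem_Ici.mpr le_rfl), hP0, hQ0]
    rw [← hcP t ht, ← hcQ t ht, hPQ ht]

/-- Well-posedness of the forest-grass integro-differential equation on a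
compact landscape `Γ ⊂ ℝ²` with a Borel probability site measure `q`, bounded continuous
nonnegative kernels and a nonnegative bounded Lipschitz mortality `φ`: for every continuous
initial datum with values in `[0,1]` there exists a jointly continuous, continuously
time-differentiable solution staying in `[0,1]`, and any two such solutions agree for all
`t ≥ 0`. -/
theorem forest_grass_ide_wellposed
    (Γ : Set (ℝ × ℝ)) (hΓ : IsCompact Γ)
    (q : Measure Γ) [IsProbabilityMeasure q]
    (J W : Γ → Γ → ℝ)
    (hJcont : Continuous fun p : Γ × Γ => J p.1 p.2)
    (hWcont : Continuous fun p : Γ × Γ => W p.1 p.2)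
    (hJnn : ∀ r r' : Γ, 0 ≤ J r r') (hWnn : ∀ r r' : Γ, 0 ≤ W r r')
    (CJ CW : ℝ) (hJbdd : ∀ r r' : Γ, J r r' ≤ CJ) (hWbdd : ∀ r r' : Γ, W r r' ≤ CW)
    (φ : ℝ → ℝ) (L : NNReal) (hφ : LipschitzWith L φ) (hφnn : ∀ x : ℝ, 0 ≤ φ x)
    (Cφ : ℝ) (hφbdd : ∀ x : ℝ, φ x ≤ Cφ)
    (P₀ : Γ → ℝ) (hP₀cont : Continuous P₀) (hP₀range : ∀ r : Γ, P₀ r ∈ Icc (0:ℝ) 1) :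
    (∃ P : ℝ → Γ → ℝ,
      (∀ r : Γ, P 0 r = P₀ r) ∧
      ContinuousOn (fun p : ℝ × Γ => P p.1 p.2) (Ici (0:ℝ) ×ˢ univ) ∧
      (∀ r : Γ, ∀ t ∈ Ici (0:ℝ),
        HasDerivWithinAt (fun s => P s r)
          ((1 - P t r) * (∫ r', J r' r * P t r' ∂q)
            - P t r * φ (∫ r', W r' r * (1 - P t r') ∂q)) (Ici 0) t) ∧
      (∀ t ∈ Ici (0:ℝ), ∀ r : Γ, P t r ∈ Icc (0:ℝ) 1)) ∧
    (∀ P Q : ℝ → Γ → ℝ,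
      (∀ r : Γ, P 0 r = P₀ r) →
      ContinuousOn (fun p : ℝ × Γ => P p.1 p.2) (Ici (0:ℝ) ×ˢ univ) →
      (∀ r : Γ, ∀ t ∈ Ici (0:ℝ),
        HasDerivWithinAt (fun s => P s r)
          ((1 - P t r) * (∫ r', J r' r * P t r' ∂q)
            - P t r * φ (∫ r', W r' r * (1 - P t r') ∂q)) (Ici 0) t) →
      (∀ r : Γ, Q 0 r = P₀ r) →
      ContinuousOn (fun p : ℝ × Γ => Q p.1 p.2) (Ici (0:ℝ) ×ˢ univ) →
      (∀ r : Γ, ∀ t ∈ Ici (0:ℝ),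
        HasDerivWithinAt (fun s => Q s r)
          ((1 - Q t r) * (∫ r', J r' r * Q t r' ∂q)
            - Q t r * φ (∫ r', W r' r * (1 - Q t r') ∂q)) (Ici 0) t) →
      ∀ t ∈ Ici (0:ℝ), ∀ r : Γ, P t r = Q t r) :=
  forest_grass_ide_wellposed_general Γ hΓ q J W hJcont hWcont hJnn φ L hφ hφnn P₀ hP₀cont hP₀range
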